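/- arXiv:1301.2647 — 3 statements merged into one kernel-verified Lean document; each statement's English description precedes it below -/
import Mathlib

section
/- Every formal power series f(q) with integer coefficients and constant term 1 can be written uniquely as an infinite product ∏_{k=1}^∞ (1-q^k)^{i_k} where (i_k) is a sequence of integers (the product converging in the q-adic topology, i.e., modulo q^N it equals the finite product over k < N for every N). -/
open PowerSeries Finset

/-- The power series `1 - q^(k+1)`, as a unit of `ℤ⟦X⟧`. -/
noncomputable def oneSubX (k : ℕ) : (PowerSeries ℤ)ˣ :=
  ((PowerSeries.isUnit_iff_constantCoeff (φ := 1 - X ^ (k + 1))).mpr (by simp)).unit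

/-- `f = ∏_{k=1}^∞ (1 - q^k)^(i k)` in `ℤ⟦X⟧`, interpreted q-adically: modulo `q^N`, `f`
agrees with the finite product of the factors `(1 - q^k)^(i k)` for `1 ≤ k ≤ N`.
Negative exponents are interpreted via inverses in the unit group of `ℤ⟦X⟧`. -/
def HasProdExpansion (f : PowerSeries ℤ) (i : ℕ → ℤ) : Prop :=
  ∀ N : ℕ, trunc N f =
    trunc N ((∏ k ∈ range N, oneSubX k ^ i (k + 1) : (PowerSeries ℤ)ˣ) : PowerSeries ℤ)

/-!
Write `P_N = ∏_{k=1}^{N} (1 - q^k)^{i_k}`. For every integer `z`,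
`(1 - q^(N+1))^z ≡ 1 - z q^(N+1) mod q^(N+2)`, so `P_{N+1}` agrees with `P_N` below degree `N+1`
and its coefficient of `q^(N+1)` is that of `P_N` minus `i_{N+1}`. Hence `f` has the expansion
exactly when `i_{N+1} = [q^(N+1)] (P_N - f)` for all `N`: a recursion expressing each exponent
through the earlier ones, which has exactly one solution.
-/

theorem Nat.existsUnique_forall_eq_of_strongRecursion {α : Type*} [Inhabited α]
    (F : ℕ → (ℕ → α) → α) (hF : ∀ n s t, (∀ k < n, s k = t k) → F n s = F n t) :
    ∃! s : ℕ → α, ∀ n, s n = F n s := by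
  let s : ℕ → α := Nat.strongRec fun n ih => F n fun k => if h : k < n then ih k h else default
  have hs (n : ℕ) : s n = F n fun k => if k < n then s k else default :=
    Nat.strongRec_eq _ n
  refine ⟨s, fun n => (hs n).trans (hF n _ _ fun k hk => if_pos hk), fun t ht => ?_⟩
  funext n
  induction n using Nat.strong_induction_on with
  | _ n ih => rw [ht n, hs n]; exact hF n _ _ fun k hk => by rw [ih k hk, if_pos hk]

theorem sq_dvd_pow_sub_one_sub_mul {A : Type*} [CommRing A] {d x : A} (hx : d ∣ x - 1)
    (n : ℕ) : d ^ 2 ∣ x ^ n - 1 - n * (x - 1) := by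
  have := sq_dvd_add_pow_sub_sub (x - 1) 1 n
  simp only [one_pow, add_sub_cancel, one_mul] at this
  exact (pow_dvd_pow_of_dvd hx 2).trans (by convert this using 1; ring)

theorem Units.sq_dvd_zpow_sub_one_sub_mul {A : Type*} [CommRing A] (u : Aˣ) {d : A}
    (hd : d ∣ u - 1) (z : ℤ) : d ^ 2 ∣ ((u ^ z : Aˣ) : A) - 1 - z * (u - 1) := by
  obtain ⟨n, rfl | rfl⟩ := z.eq_nat_or_neg
  · simpa using sq_dvd_pow_sub_one_sub_mul hd n
  · have hvu : ((u⁻¹ : Aˣ) : A) * u = 1 := Units.inv_mul u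
    have hinv : ((u⁻¹ : Aˣ) : A) - 1 = -((u⁻¹ : Aˣ) : A) * (u - 1) := by
      linear_combination hvu
    have hsq : ((u⁻¹ : Aˣ) : A) - 1 + (u - 1) = ((u⁻¹ : Aˣ) : A) * (u - 1) ^ 2 := by
      linear_combination (2 - (u : A)) * hvu
    have := dvd_add (sq_dvd_pow_sub_one_sub_mul (hinv ▸ hd.mul_left _) n)
      ((pow_dvd_pow_of_dvd hd 2).mul_left ((n : A) * ((u⁻¹ : Aˣ) : A)))
    rw [zpow_neg, ← inv_zpow, zpow_natCast, Units.val_pow_eq_pow_val]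
    convert this using 1
    push_cast
    linear_combination (n : A) * hsq

theorem PowerSeries.trunc_eq_trunc_iff {R : Type*} [Semiring R] {φ ψ : R⟦X⟧} {N : ℕ} :
    trunc N φ = trunc N ψ ↔ ∀ m < N, coeff m φ = coeff m ψ := by
  refine ⟨fun h m hm => ?_, fun h => Polynomial.ext fun m => ?_⟩
  · simpa [coeff_trunc, hm] using congr_arg (Polynomial.coeff · m) h
  · simp only [coeff_trunc]
    split_ifs with hm
    exacts [h m hm, rfl]

theorem X_pow_dvd_oneSubX_zpow_sub (k : ℕ) (z : ℤ) :
    (X : ℤ⟦X⟧) ^ (k + 2) ∣ ((oneSubX k ^ z : ℤ⟦X⟧ˣ) : ℤ⟦X⟧) - (1 - (z : ℤ⟦X⟧) * X ^ (k + 1)) := by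
  have hval : ((oneSubX k : ℤ⟦X⟧ˣ) : ℤ⟦X⟧) = 1 - X ^ (k + 1) := IsUnit.unit_spec _
  have := (oneSubX k).sq_dvd_zpow_sub_one_sub_mul (d := X ^ (k + 1)) ⟨-1, by rw [hval]; ring⟩ z
  rw [hval, ← pow_mul] at this
  refine (pow_dvd_pow X (show k + 2 ≤ (k + 1) * 2 by omega)).trans ?_
  convert this using 1
  ring

noncomputable def partialProd (i : ℕ → ℤ) (N : ℕ) : ℤ⟦X⟧ :=
  ((∏ k ∈ range N, oneSubX k ^ i (k + 1) : ℤ⟦X⟧ˣ) : ℤ⟦X⟧)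

theorem partialProd_congr {i j : ℕ → ℤ} {N : ℕ} (h : ∀ k ≤ N, i k = j k) :
    partialProd i N = partialProd j N := by
  unfold partialProd
  congr 1
  exact prod_congr rfl fun k hk => by rw [h (k + 1) (mem_range.mp hk)]

section partialProd

variable (i : ℕ → ℤ)

theorem X_pow_dvd_partialProd_succ_sub (N : ℕ) :
    (X : ℤ⟦X⟧) ^ (N + 2) ∣
      partialProd i (N + 1) - partialProd i N * (1 - (i (N + 1) : ℤ⟦X⟧) * X ^ (N + 1)) := by
  have hsucc : partialProd i (N + 1) = partialProd i N * (oneSubX N ^ i (N + 1) : ℤ⟦X⟧ˣ) := by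
    rw [partialProd, prod_range_succ, Units.val_mul, partialProd]
  rw [hsucc, ← mul_sub]
  exact (X_pow_dvd_oneSubX_zpow_sub N (i (N + 1))).mul_left _

theorem coeff_partialProd_succ_of_lt {m N : ℕ} (hm : m < N + 1) :
    coeff m (partialProd i (N + 1)) = coeff m (partialProd i N) := by
  obtain ⟨c, hc⟩ := X_pow_dvd_partialProd_succ_sub i N
  have hdvd : (X : ℤ⟦X⟧) ^ (N + 1) ∣ partialProd i (N + 1) - partialProd i N :=
    ⟨X * c - (i (N + 1) : ℤ⟦X⟧) * partialProd i N, by linear_combination hc⟩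
  exact sub_eq_zero.mp (by rw [← map_sub]; exact X_pow_dvd_iff.mp hdvd m hm)

theorem constantCoeff_partialProd (N : ℕ) : constantCoeff (partialProd i N) = 1 := by
  induction N with
  | zero => simp [partialProd]
  | succ N ih =>
    rwa [← coeff_zero_eq_constantCoeff_apply, coeff_partialProd_succ_of_lt i N.succ_pos,
      coeff_zero_eq_constantCoeff_apply]

theorem coeff_succ_partialProd_succ (N : ℕ) :
    coeff (N + 1) (partialProd i (N + 1)) = coeff (N + 1) (partialProd i N) - i (N + 1) := by
  obtain ⟨c, hc⟩ := X_pow_dvd_partialProd_succ_sub i N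
  have hexpand : partialProd i (N + 1) = partialProd i N
      - X ^ (N + 1) * ((i (N + 1) : ℤ⟦X⟧) * partialProd i N - X * c) := by
    linear_combination hc
  simp [hexpand, coeff_X_pow_mul', constantCoeff_partialProd]

theorem coeff_partialProd_of_lt {m N : ℕ} (hm : m < N) :
    coeff m (partialProd i N) = coeff m (partialProd i (m + 1)) := by
  induction N, hm using Nat.le_induction with
  | base => rfl
  | succ N hmN ih => rw [coeff_partialProd_succ_of_lt i (by omega), ih]

theorem hasProdExpansion_iff (f : ℤ⟦X⟧) :
    HasProdExpansion f i ↔ ∀ m, coeff m f = coeff m (partialProd i (m + 1)) := by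
  change (∀ N, trunc N f = trunc N (partialProd i N)) ↔ _
  simp only [trunc_eq_trunc_iff]
  refine ⟨fun h m => h (m + 1) m m.lt_succ_self, fun h N m hm => ?_⟩
  rw [h m, coeff_partialProd_of_lt i hm]

end partialProd

noncomputable def nextExponent (f : ℤ⟦X⟧) : ℕ → (ℕ → ℤ) → ℤ
  | 0, _ => 0
  | N + 1, i => coeff (N + 1) (partialProd i N) - coeff (N + 1) f

theorem nextExponent_congr (f : ℤ⟦X⟧) {n : ℕ} {i j : ℕ → ℤ} (h : ∀ k < n, i k = j k) :
    nextExponent f n i = nextExponent f n j := by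
  cases n with
  | zero => rfl
  | succ N => simp only [nextExponent, partialProd_congr fun k hk => h k (Nat.lt_succ_of_le hk)]

theorem and_hasProdExpansion_iff {f : ℤ⟦X⟧} (hf : constantCoeff f = 1) {i : ℕ → ℤ} :
    i 0 = 0 ∧ HasProdExpansion f i ↔ ∀ n, i n = nextExponent f n i := by
  have hcoeff (N : ℕ) : coeff (N + 1) (partialProd i (N + 2))
      = coeff (N + 1) (partialProd i N) - i (N + 1) := by
    rw [coeff_partialProd_succ_of_lt i (by omega), coeff_succ_partialProd_succ]
  have hzero : coeff 0 f = coeff 0 (partialProd i 1) := by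
    simp only [coeff_zero_eq_constantCoeff_apply, hf, constantCoeff_partialProd]
  rw [hasProdExpansion_iff, ← Nat.and_forall_add_one (p := fun n => i n = nextExponent f n i),
    ← Nat.and_forall_add_one (p := fun m => coeff m f = coeff m (partialProd i (m + 1)))]
  simp only [hzero, hcoeff, true_and, nextExponent]
  exact and_congr_right' (forall_congr' fun N => by constructor <;> intro <;> linarith)

/-- Every `f ∈ ℤ⟦q⟧` with constant term `1` can be written uniquely as
`∏_{k=1}^∞ (1 - q^k)^(i k)` for a sequence of integers `(i k)_{k ≥ 1}`
(we normalize the irrelevant value `i 0` to be `0`). -/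
theorem unique_product_expansion (f : PowerSeries ℤ) (hf : constantCoeff f = 1) :
    ∃! i : ℕ → ℤ, i 0 = 0 ∧ HasProdExpansion f i :=
  (existsUnique_congr fun _ => and_hasProdExpansion_iff hf).mpr
    (Nat.existsUnique_forall_eq_of_strongRecursion (nextExponent f) fun _ _ _ =>
      nextExponent_congr f)
end

section
/- For the power series 1 - 2q ∈ ℤ[[q]], the exponents i_k in the product expansion 1 - 2q = ∏_{k≥1}(1-q^k)^{i_k} satisfy k·i_k = ∑_{d | k} μ(d) 2^{k/d}; in particular i_1 = 2, i_2 = 1, i_3 = 2, i_6 = 9, and i_18 = 14532. -/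
/-!
Apply the logarithmic derivative `q f'/f`. It turns the product into the sum
`∑_k i_k · q (1 - q^k)'/(1 - q^k) = -∑_k k i_k ∑_{m ≥ 1} q^{km}`, and its coefficients below
`q^N` only depend on `f` modulo `q^N`, so the truncated products suffice. Since
`q (1 - 2q)'/(1 - 2q) = -∑_{n ≥ 1} 2^n q^n`, comparing coefficients of `q^n` gives
`∑_{d ∣ n} d i_d = 2^n`, and Möbius inversion gives the formula for `k i_k`.
-/

open PowerSeries Finset

namespace PowerSeries

variable {R : Type*} [CommRing R]

noncomputable def unitLogDeriv (u : R⟦X⟧ˣ) : R⟦X⟧ := ↑u⁻¹ * d⁄dX R u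

theorem unitLogDeriv_mul (u v : R⟦X⟧ˣ) :
    unitLogDeriv (u * v) = unitLogDeriv u + unitLogDeriv v := by
  have hu : (↑u⁻¹ * u : R⟦X⟧) = 1 := u.inv_mul
  have hv : (↑v⁻¹ * v : R⟦X⟧) = 1 := v.inv_mul
  simp only [unitLogDeriv, Units.val_mul, mul_inv_rev, Derivation.leibniz, smul_eq_mul]
  linear_combination (↑v⁻¹ * d⁄dX R v) * hu + (↑u⁻¹ * d⁄dX R u) * hv

noncomputable def unitLogDerivHom : R⟦X⟧ˣ →* Multiplicative R⟦X⟧ :=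
  MonoidHom.mk' (fun u ↦ .ofAdd (unitLogDeriv u)) unitLogDeriv_mul

theorem unitLogDeriv_zpow (u : R⟦X⟧ˣ) (z : ℤ) : unitLogDeriv (u ^ z) = z • unitLogDeriv u :=
  congrArg Multiplicative.toAdd (map_zpow unitLogDerivHom u z)

theorem unitLogDeriv_prod {ι : Type*} (s : Finset ι) (u : ι → R⟦X⟧ˣ) :
    unitLogDeriv (∏ k ∈ s, u k) = ∑ k ∈ s, unitLogDeriv (u k) :=
  congrArg Multiplicative.toAdd (map_prod unitLogDerivHom u s)

theorem X_pow_dvd_sub_of_trunc_eq {N : ℕ} {f g : R⟦X⟧} (h : trunc N f = trunc N g) :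
    X ^ N ∣ f - g := by
  rw [X_pow_dvd_iff]
  intro m hm
  simpa [coeff_trunc, hm, sub_eq_zero] using congrArg (Polynomial.coeff · m) h

theorem X_pow_dvd_X_mul_derivative {N : ℕ} {f : R⟦X⟧} (hf : X ^ N ∣ f) :
    X ^ N ∣ X * d⁄dX R f := by
  rw [X_pow_dvd_iff] at hf ⊢
  rintro (_ | m) hm
  · simp
  · rw [coeff_succ_X_mul, coeff_derivative, hf (m + 1) hm, zero_mul]

theorem X_pow_dvd_X_mul_unitLogDeriv_sub {N : ℕ} {u v : R⟦X⟧ˣ}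
    (h : X ^ N ∣ (v - u : R⟦X⟧)) : X ^ N ∣ X * unitLogDeriv v - X * unitLogDeriv u := by
  have hu : (↑u⁻¹ * u : R⟦X⟧) = 1 := u.inv_mul
  have hv : (↑v⁻¹ * v : R⟦X⟧) = 1 := v.inv_mul
  simp only [unitLogDeriv]
  generalize (u : R⟦X⟧) = f, (v : R⟦X⟧) = g, (↑u⁻¹ : R⟦X⟧) = f', (↑v⁻¹ : R⟦X⟧) = g' at *
  have key : X * (g' * d⁄dX R g) - X * (f' * d⁄dX R f) =
      g' * f' * (X * d⁄dX R (g - f) * f - X * d⁄dX R f * (g - f)) := by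
    rw [map_sub]
    linear_combination (-(X * g' * d⁄dX R g)) * hu + (X * f' * d⁄dX R f) * hv
  rw [key]
  exact Dvd.dvd.mul_left (dvd_sub ((X_pow_dvd_X_mul_derivative h).mul_right _)
    (h.mul_left _)) _

theorem coeff_X_mul_mk_one {n : ℕ} (hn : n ≠ 0) : coeff n (X * mk 1 : R⟦X⟧) = 1 := by
  obtain ⟨k, rfl⟩ := Nat.exists_eq_succ_of_ne_zero hn
  rw [coeff_succ_X_mul, coeff_mk, Pi.one_apply]

theorem coeff_X_mul_unitLogDeriv_of_val_eq_one_sub_X_pow {u : R⟦X⟧ˣ} {m : ℕ} (hm : m ≠ 0)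
    (hu : (u : R⟦X⟧) = 1 - X ^ m) {n : ℕ} (hn : n ≠ 0) :
    coeff n (X * unitLogDeriv u) = if m ∣ n then -(m : R) else 0 := by
  have hinv : (↑u⁻¹ : R⟦X⟧) = expand m hm (mk 1) := by
    refine Units.inv_eq_of_mul_eq_one_right ?_
    rw [hu, ← expand_X (R := R) m hm, ← map_one (expand m hm), ← map_sub, ← map_mul, mul_comm,
      mk_one_mul_one_sub_eq_one, map_one]
  have hX : X * unitLogDeriv u = -(C (m : R) * expand m hm (X * mk 1)) := by
    rw [unitLogDeriv, hinv, hu, map_sub, derivative_one, derivative_pow, derivative_X, map_mul,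
      expand_X, map_natCast, ← mul_pow_sub_one hm X]
    ring
  rw [hX, map_neg, coeff_C_mul, coeff_expand]
  split_ifs with hd
  · obtain ⟨k, rfl⟩ := hd
    rw [Nat.mul_div_cancel_left _ (Nat.pos_of_ne_zero hm),
      coeff_X_mul_mk_one (right_ne_zero_of_mul hn), mul_one]
  · rw [mul_zero, neg_zero]

theorem coeff_X_mul_unitLogDeriv_of_val_eq_one_sub_C_mul_X {u : R⟦X⟧ˣ} {a : R}
    (hu : (u : R⟦X⟧) = 1 - C a * X) {n : ℕ} (hn : n ≠ 0) :
    coeff n (X * unitLogDeriv u) = -a ^ n := by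
  have hinv : (↑u⁻¹ : R⟦X⟧) = rescale a (mk 1) := by
    refine Units.inv_eq_of_mul_eq_one_right ?_
    rw [hu, ← rescale_X, ← map_one (rescale a), ← map_sub, ← map_mul, mul_comm,
      mk_one_mul_one_sub_eq_one, map_one]
  have hX : X * unitLogDeriv u = -rescale a (X * mk 1) := by
    rw [unitLogDeriv, hinv, hu, map_sub, derivative_one, Derivation.leibniz, derivative_X,
      derivative_C, map_mul, rescale_X]
    simp only [smul_eq_mul]
    ring
  rw [hX, map_neg, coeff_rescale, coeff_X_mul_mk_one hn, mul_one]

end PowerSeries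

theorem Nat.sum_range_ite_succ_dvd_eq_sum_divisors {M : Type*} [AddCommMonoid M] {n N : ℕ}
    (hn : n ≠ 0) (hN : n ≤ N) (g : ℕ → M) :
    ∑ k ∈ range N, (if k + 1 ∣ n then g (k + 1) else 0) = ∑ d ∈ n.divisors, g d := by
  rw [← sum_filter]
  refine sum_nbij' (· + 1) (· - 1) ?_ ?_ ?_ ?_ fun _ _ ↦ rfl
  · intro k hk
    exact Nat.mem_divisors.mpr ⟨(mem_filter.mp hk).2, hn⟩
  · intro d hd
    have hpos := Nat.pos_of_mem_divisors hd
    have hle := Nat.divisor_le hd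
    rw [mem_filter, mem_range, Nat.sub_add_cancel hpos]
    exact ⟨by omega, Nat.dvd_of_mem_divisors hd⟩
  · intro k _
    exact Nat.add_sub_cancel k 1
  · intro d hd
    exact Nat.sub_add_cancel (Nat.pos_of_mem_divisors hd)

theorem coeff_X_mul_unitLogDeriv_oneSubX (k : ℕ) {n : ℕ} (hn : n ≠ 0) :
    coeff n (X * unitLogDeriv (oneSubX k)) = if k + 1 ∣ n then -((k + 1 : ℕ) : ℤ) else 0 :=
  coeff_X_mul_unitLogDeriv_of_val_eq_one_sub_X_pow k.succ_ne_zero (IsUnit.unit_spec _) hn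

theorem HasProdExpansion.sum_divisors_mul_eq {f : ℤ⟦X⟧} (hf : IsUnit f) {i : ℕ → ℤ}
    (h : HasProdExpansion f i) {n : ℕ} (hn : n ≠ 0) :
    ∑ d ∈ n.divisors, (d : ℤ) * i d = -coeff n (X * unitLogDeriv hf.unit) := by
  set P := ∏ k ∈ range (n + 1), oneSubX k ^ i (k + 1)
  have hcongr : coeff n (X * unitLogDeriv P) = coeff n (X * unitLogDeriv hf.unit) := by
    have hdvd : X ^ (n + 1) ∣ (P - hf.unit : ℤ⟦X⟧) := by
      rw [hf.unit_spec]
      exact X_pow_dvd_sub_of_trunc_eq (h (n + 1)).symm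
    rw [← sub_eq_zero, ← map_sub]
    exact X_pow_dvd_iff.mp (X_pow_dvd_X_mul_unitLogDeriv_sub hdvd) n n.lt_succ_self
  rw [← hcongr, unitLogDeriv_prod, mul_sum, map_sum,
    ← Nat.sum_range_ite_succ_dvd_eq_sum_divisors hn n.le_succ, ← sum_neg_distrib]
  refine sum_congr rfl fun k _ ↦ ?_
  rw [unitLogDeriv_zpow, mul_smul_comm, map_zsmul, coeff_X_mul_unitLogDeriv_oneSubX k hn,
    smul_eq_mul]
  split_ifs <;> ring

theorem HasProdExpansion.sum_divisors_mul_eq_two_pow {i : ℕ → ℤ}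
    (hi : HasProdExpansion (1 - 2 * X) i) {n : ℕ} (hn : n ≠ 0) :
    ∑ d ∈ n.divisors, (d : ℤ) * i d = 2 ^ n := by
  have hf : IsUnit (1 - 2 * X : ℤ⟦X⟧) := isUnit_iff_constantCoeff.mpr (by simp)
  have hu : (hf.unit : ℤ⟦X⟧) = 1 - C 2 * X := by rw [hf.unit_spec, map_ofNat]
  rw [hi.sum_divisors_mul_eq hf hn, coeff_X_mul_unitLogDeriv_of_val_eq_one_sub_C_mul_X hu hn,
    neg_neg]

open ArithmeticFunction in
theorem HasProdExpansion.mul_eq_sum_moebius_mul_two_pow {i : ℕ → ℤ}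
    (hi : HasProdExpansion (1 - 2 * X) i) {k : ℕ} (hk : 0 < k) :
    (k : ℤ) * i k = ∑ d ∈ k.divisors, (moebius d : ℤ) * 2 ^ (k / d) := by
  have h := sum_eq_iff_sum_mul_moebius_eq.mp
    (fun n hn ↦ hi.sum_divisors_mul_eq_two_pow hn.ne') k hk
  simp only [Int.cast_id] at h
  rw [Nat.sum_divisorsAntidiagonal (fun d e ↦ (moebius d : ℤ) * 2 ^ e)] at h
  exact h.symm

/-- The exponents in the product expansion of `1 - 2q` satisfy the Möbius-sum formula,
and in particular `i 1 = 2`, `i 2 = 1`, `i 3 = 2`, `i 6 = 9`, `i 18 = 14532`. -/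
theorem charSeq_one_sub_two_q (i : ℕ → ℤ)
    (hi : HasProdExpansion (1 - 2 * X) i) :
    (∀ k : ℕ, 1 ≤ k → (k : ℤ) * i k =
        ∑ d ∈ Nat.divisors k, (ArithmeticFunction.moebius d : ℤ) * 2 ^ (k / d)) ∧
    i 1 = 2 ∧ i 2 = 1 ∧ i 3 = 2 ∧ i 6 = 9 ∧ i 18 = 14532 := by
  have eval_at {k : ℕ} {v : ℤ} (hk : 0 < k)
      (hv : ∑ d ∈ k.divisors, (ArithmeticFunction.moebius d : ℤ) * 2 ^ (k / d) = k * v) :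
      i k = v :=
    mul_left_cancel₀ (by positivity) ((hi.mul_eq_sum_moebius_mul_two_pow hk).trans hv)
  exact ⟨fun k hk ↦ hi.mul_eq_sum_moebius_mul_two_pow hk,
    eval_at one_pos (by decide +kernel), eval_at two_pos (by decide +kernel),
    eval_at three_pos (by decide +kernel), eval_at (by norm_num) (by decide +kernel),
    eval_at (by norm_num) (by decide +kernel)⟩
end

section
/- (Witt formula) For each n ≥ 1, the identity 1 - n·q = ∏_{k=1}^∞ (1-q^k)^{ℓ_n(k)} holds in ℤ[[q]], where ℓ_n(k) = (1/k) ∑_{d | k} μ(d) n^{k/d} is the necklace (Witt) number. -/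
/-! Logarithmic derivatives `u'/u` turn the product into a sum. The factor `1 - q^d` contributes
`-d q^(d-1) / (1 - q^d)`, whose coefficient of `q^(m-1)` is `-d` if `d ∣ m` and `0` otherwise, and
`1 - n q` contributes `-n^m` there; so the two sides have the same logarithmic derivative modulo
`q^N` because `∑_{d ∣ m} d ℓ_n(d) = n^m`, the Möbius inverse of the definition of `ℓ_n`. Over the
torsion-free ring `ℤ`, two series with constant term `1` whose logarithmic derivatives agree modulo
`q^N` agree modulo `q^N`.

That `k` divides `∑_{d ∣ k} μ(d) n^(k/d)` is Gauss's congruence: for `k = p^(a+1) t` with `p ∤ t`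
only `d = e` and `d = p e` with `e ∣ t` can be squarefree, and they pair up into
`μ(e) (y^(p^(a+1)) - y^(p^a))` with `y = n^(t/e)`, which `p^(a+1)` divides by Fermat's little
theorem lifted to prime powers. -/

open PowerSeries Finset

/-- The necklace (Witt) number `ℓ_n(k) = (1/k) ∑_{d ∣ k} μ(d) n^(k/d)`
(the division is exact; see the divisibility statement). -/
def necklace (n k : ℕ) : ℤ :=
  (∑ d ∈ Nat.divisors k, (ArithmeticFunction.moebius d : ℤ) * (n : ℤ) ^ (k / d)) / k

theorem sum_range_ite_succ_dvd {M : Type*} [AddCommMonoid M] {m N : ℕ} (hm : 0 < m)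
    (hmN : m ≤ N) (g : ℕ → M) :
    ∑ k ∈ range N, (if k + 1 ∣ m then g (k + 1) else 0) = ∑ d ∈ m.divisors, g d := by
  rw [← sum_filter, ← sum_image fun _ _ _ _ => Nat.succ_inj.1]
  congr 1
  ext d
  simp only [mem_image, mem_filter, mem_range, Nat.mem_divisors]
  constructor
  · rintro ⟨k, ⟨-, hk⟩, rfl⟩
    exact ⟨hk, hm.ne'⟩
  · rintro ⟨hd, -⟩
    have hdm : d ≤ m := Nat.le_of_dvd hm hd
    have hd0 : 0 < d := Nat.pos_of_dvd_of_pos hd hm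
    exact ⟨d - 1, ⟨by omega, by rwa [Nat.sub_add_cancel hd0]⟩, Nat.sub_add_cancel hd0⟩

section GaussCongruence

open ArithmeticFunction ArithmeticFunction.Moebius Pointwise

theorem prime_pow_dvd_pow_prime_pow_sub {p : ℕ} (hp : p.Prime) (a : ℕ) (y : ℤ) :
    (p : ℤ) ^ (a + 1) ∣ y ^ p ^ (a + 1) - y ^ p ^ a := by
  simpa [← pow_mul, ← pow_succ'] using dvd_sub_pow_of_dvd_sub (Int.prime_dvd_pow_self_sub hp y) a

theorem sum_divisors_prime_pow_mul_moebius_mul {p t : ℕ} (hp : p.Prime) (hpt : ¬p ∣ t) (a : ℕ)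
    (f : ℕ → ℤ) :
    ∑ d ∈ (p ^ (a + 1) * t).divisors, (μ d : ℤ) * f d =
      ∑ e ∈ t.divisors, (μ e : ℤ) * (f e - f (p * e)) := by
  have hcop : (p ^ (a + 1)).Coprime t := .pow_left _ ((hp.coprime_iff_not_dvd).2 hpt)
  rw [Nat.divisors_mul, Finset.mul_def, sum_image hcop.mul_injOn_divisors, sum_product, sum_comm]
  refine sum_congr rfl fun e he => ?_
  have hpe : p.Coprime e :=
    (hp.coprime_iff_not_dvd).2 fun h => hpt (h.trans (Nat.dvd_of_mem_divisors he))
  have hsq : ∀ i, μ (p ^ (i + 2) * e) = 0 := fun i => moebius_eq_zero_of_not_squarefree fun h =>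
    hp.not_isUnit (h p (dvd_mul_of_dvd_left (by rw [← sq]; exact pow_dvd_pow p (by omega)) e))
  rw [Nat.sum_divisors_prime_pow hp, sum_range_succ', sum_range_succ', sum_eq_zero fun i _ => by
    rw [hsq i, zero_mul], pow_one, pow_zero, one_mul,
    isMultiplicative_moebius.map_mul_of_coprime hpe, moebius_apply_prime hp]
  push_cast
  ring

theorem prime_pow_dvd_sum_moebius_mul_pow {p t : ℕ} (hp : p.Prime) (hpt : ¬p ∣ t) (a : ℕ)
    (x : ℤ) :
    (p : ℤ) ^ (a + 1) ∣
      ∑ d ∈ (p ^ (a + 1) * t).divisors, (μ d : ℤ) * x ^ (p ^ (a + 1) * t / d) := by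
  rw [sum_divisors_prime_pow_mul_moebius_mul hp hpt]
  refine dvd_sum fun e he => dvd_mul_of_dvd_right ?_ _
  obtain ⟨⟨c, rfl⟩, ht⟩ := Nat.mem_divisors.1 he
  have he0 : 0 < e := Nat.pos_of_ne_zero (left_ne_zero_of_mul ht)
  have h1 : p ^ (a + 1) * (e * c) / e = c * p ^ (a + 1) := by
    rw [mul_left_comm, Nat.mul_div_cancel_left _ he0, mul_comm]
  have h2 : p ^ (a + 1) * (e * c) / (p * e) = c * p ^ a := by
    rw [show p ^ (a + 1) * (e * c) = p * e * (c * p ^ a) by ring,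
      Nat.mul_div_cancel_left _ (Nat.mul_pos hp.pos he0)]
  rw [h1, h2, pow_mul, pow_mul]
  exact prime_pow_dvd_pow_prime_pow_sub hp a (x ^ c)

theorem dvd_sum_moebius_mul_pow (m : ℕ) (x : ℤ) :
    (m : ℤ) ∣ ∑ d ∈ m.divisors, (μ d : ℤ) * x ^ (m / d) := by
  rcases eq_or_ne m 0 with rfl | hm
  · simp
  refine Int.natCast_dvd.2 <| (Nat.dvd_iff_prime_pow_dvd_dvd _ _).2 fun p k hp hpk => ?_
  have hk := (hp.pow_dvd_iff_le_factorization hm).1 hpk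
  cases hv : m.factorization p with
  | zero => simp_all
  | succ a =>
    obtain ⟨t, hpt, rfl⟩ : ∃ t, ¬p ∣ t ∧ m = p ^ (a + 1) * t :=
      ⟨_, Nat.not_dvd_ordCompl hp hm, by rw [← hv, Nat.ordProj_mul_ordCompl_eq_self]⟩
    refine (pow_dvd_pow p (hv ▸ hk)).trans (Int.natCast_dvd.1 ?_)
    exact_mod_cast prime_pow_dvd_sum_moebius_mul_pow hp hpt a x

end GaussCongruence

section Necklace

open ArithmeticFunction ArithmeticFunction.Moebius

theorem natCast_mul_necklace (n k : ℕ) :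
    (k : ℤ) * necklace n k = ∑ d ∈ k.divisors, (μ d : ℤ) * (n : ℤ) ^ (k / d) :=
  Int.mul_ediv_cancel' (dvd_sum_moebius_mul_pow k n)

theorem sum_divisors_mul_necklace (n : ℕ) {m : ℕ} (hm : 0 < m) :
    ∑ d ∈ m.divisors, (d : ℤ) * necklace n d = (n : ℤ) ^ m := by
  refine (sum_eq_iff_sum_mul_moebius_eq (f := fun d => (d : ℤ) * necklace n d)
    (g := fun m => (n : ℤ) ^ m)).2 (fun m _ => ?_) m hm
  rw [natCast_mul_necklace]
  exact Nat.sum_divisorsAntidiagonal fun a b => (μ a : ℤ) * (n : ℤ) ^ b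

end Necklace

namespace PowerSeries

variable {R : Type*} [CommRing R]

noncomputable def logDerivUnits : R⟦X⟧ˣ →* Multiplicative R⟦X⟧ where
  toFun u := .ofAdd (d⁄dX R u * ↑u⁻¹)
  map_one' := by simp
  map_mul' u v := by
    rw [← ofAdd_add]
    refine congrArg Multiplicative.ofAdd ?_
    rw [mul_inv_rev, Units.val_mul, Units.val_mul, Derivation.leibniz,
      smul_eq_mul, smul_eq_mul]
    linear_combination (d⁄dX R (v : R⟦X⟧) * (↑v⁻¹ : R⟦X⟧)) * u.mul_inv +
      (d⁄dX R (u : R⟦X⟧) * (↑u⁻¹ : R⟦X⟧)) * v.mul_inv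

theorem toAdd_logDerivUnits_eq_iff {u : R⟦X⟧ˣ} {h : R⟦X⟧} :
    (logDerivUnits u).toAdd = h ↔ d⁄dX R u = h * u :=
  Units.mul_inv_eq_iff_eq_mul _

theorem X_pow_succ_dvd_sub_C_constantCoeff [IsAddTorsionFree R] {f : R⟦X⟧} {N : ℕ}
    (h : X ^ N ∣ d⁄dX R f) : X ^ (N + 1) ∣ f - C (constantCoeff f) := by
  rw [X_pow_dvd_iff] at h ⊢
  rintro (_ | i) hi
  · simp
  · have hcoeff := h i (by omega)
    rw [coeff_derivative] at hcoeff
    rw [map_sub, coeff_C, if_neg i.succ_ne_zero, sub_zero]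
    refine (nsmul_eq_zero_iff_right i.succ_ne_zero).1 ?_
    rw [nsmul_eq_mul, mul_comm]
    exact_mod_cast hcoeff

theorem X_pow_dvd_sub_of_X_pow_dvd_logDerivUnits_sub [IsAddTorsionFree R] {u v : R⟦X⟧ˣ} {N : ℕ}
    (hc : constantCoeff (u : R⟦X⟧) = constantCoeff (v : R⟦X⟧))
    (h : X ^ N ∣ (logDerivUnits u).toAdd - (logDerivUnits v).toAdd) :
    X ^ N ∣ (u - v : R⟦X⟧) := by
  set g := u * v⁻¹
  have hlog : (logDerivUnits g).toAdd = (logDerivUnits u).toAdd - (logDerivUnits v).toAdd := by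
    simp [g, sub_eq_add_neg]
  have hderiv : X ^ N ∣ d⁄dX R (g : R⟦X⟧) := by
    rw [toAdd_logDerivUnits_eq_iff.1 rfl, hlog]
    exact dvd_mul_of_dvd_left h _
  have hg0 : constantCoeff (g : R⟦X⟧) = 1 := by
    rw [Units.val_mul, map_mul, hc, ← map_mul, Units.mul_inv, map_one]
  have hg := X_pow_succ_dvd_sub_C_constantCoeff hderiv
  rw [hg0, map_one] at hg
  have hsub : (u - v : R⟦X⟧) = (g - 1) * v := by
    rw [sub_mul, Units.val_mul, mul_assoc, Units.inv_mul, mul_one, one_mul]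
  rw [hsub]
  exact dvd_mul_of_dvd_left ((pow_dvd_pow X N.le_succ).trans hg) _

theorem trunc_eq_trunc_of_X_pow_dvd_sub {f g : R⟦X⟧} {N : ℕ} (h : X ^ N ∣ f - g) :
    trunc N f = trunc N g := by
  ext i
  rw [coeff_trunc, coeff_trunc]
  split_ifs with hi
  · simpa [sub_eq_zero] using X_pow_dvd_iff.1 h i hi
  · rfl

theorem constantCoeff_prod_zpow {ι : Type*} (s : Finset ι) (u : ι → R⟦X⟧ˣ) (e : ι → ℤ)
    (hu : ∀ i, constantCoeff (u i : R⟦X⟧) = 1) :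
    constantCoeff ((∏ i ∈ s, u i ^ e i : R⟦X⟧ˣ) : R⟦X⟧) = 1 := by
  let c : R⟦X⟧ˣ →* Rˣ := Units.map (constantCoeff (R := R)).toMonoidHom
  have hmap : ∀ w : R⟦X⟧ˣ, constantCoeff (w : R⟦X⟧) = c w := fun _ => rfl
  have hu' : ∀ i, c (u i) = 1 := fun i => Units.ext (hu i)
  simp [hmap, hu']

theorem toAdd_logDerivUnits_of_val_eq_one_sub_C_mul_X {u : R⟦X⟧ˣ} {a : R}
    (hu : (u : R⟦X⟧) = 1 - C a * X) :
    (logDerivUnits u).toAdd = -mk fun j => a ^ (j + 1) := by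
  rw [toAdd_logDerivUnits_eq_iff, hu]
  ext (_ | j) <;> simp [mul_sub, ← mul_assoc, pow_succ, coeff_succ_mul_X]

theorem toAdd_logDerivUnits_of_val_eq_one_sub_X_pow {u : R⟦X⟧ˣ} {k : ℕ}
    (hu : (u : R⟦X⟧) = 1 - X ^ (k + 1)) :
    (logDerivUnits u).toAdd = mk fun j => if k + 1 ∣ j + 1 then -((k + 1 : ℕ) : R) else 0 := by
  rw [toAdd_logDerivUnits_eq_iff, hu, map_sub, derivative_one, derivative_pow, derivative_X,
    mul_sub, mul_one, mul_comm _ (X ^ (k + 1)), ← map_natCast (C (R := R)) (k + 1)]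
  ext j
  simp only [map_sub, coeff_X_pow_mul', coeff_mk, mul_one, zero_sub, map_neg, Nat.add_sub_cancel,
    coeff_C_mul_X_pow]
  obtain hj | rfl | ⟨i, rfl⟩ : j < k ∨ j = k ∨ ∃ i, j = i + (k + 1) :=
    (lt_trichotomy j k).imp_right (Or.imp_right fun h => ⟨j - (k + 1), by omega⟩)
  · have hndvd : ¬k + 1 ∣ j + 1 := Nat.not_dvd_of_pos_of_lt j.succ_pos (by omega)
    simp [hj.ne, hndvd, hj.asymm]
  · simp
  · have hdvd : k + 1 ∣ i + (k + 1) + 1 ↔ k + 1 ∣ i + 1 := by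
      rw [add_right_comm, Nat.dvd_add_self_right]
    simp [hdvd, show i + (k + 1) ≠ k by omega]

end PowerSeries

theorem val_oneSubX (k : ℕ) : (oneSubX k : ℤ⟦X⟧) = 1 - X ^ (k + 1) :=
  IsUnit.unit_spec _

theorem coeff_toAdd_logDerivUnits_prod_oneSubX (n : ℕ) {N j : ℕ} (hj : j < N) :
    coeff j (logDerivUnits (∏ k ∈ range N, oneSubX k ^ necklace n (k + 1))).toAdd =
      -(n : ℤ) ^ (j + 1) := by
  simp only [map_prod, map_zpow, toAdd_prod, toAdd_zpow, map_sum, map_zsmul,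
    toAdd_logDerivUnits_of_val_eq_one_sub_X_pow (val_oneSubX _), coeff_mk, smul_ite, smul_zero]
  rw [sum_range_ite_succ_dvd j.add_one_pos hj fun d => necklace n d • -(d : ℤ),
    ← sum_divisors_mul_necklace n j.add_one_pos, ← sum_neg_distrib]
  refine sum_congr rfl fun d _ => ?_
  rw [smul_eq_mul]
  ring

theorem witt_formula_general (n : ℕ) :
    HasProdExpansion (1 - C (n : ℤ) * X) (fun k => necklace n k) := by
  intro N
  have hunit : IsUnit (1 - C (n : ℤ) * X) := isUnit_iff_constantCoeff.2 (by simp)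
  rw [← hunit.unit_spec]
  refine trunc_eq_trunc_of_X_pow_dvd_sub (X_pow_dvd_sub_of_X_pow_dvd_logDerivUnits_sub ?_ ?_)
  · rw [constantCoeff_prod_zpow _ _ _ fun k => by simp [val_oneSubX], hunit.unit_spec]
    simp
  · refine X_pow_dvd_iff.2 fun j hj => ?_
    rw [map_sub, coeff_toAdd_logDerivUnits_prod_oneSubX n hj,
      toAdd_logDerivUnits_of_val_eq_one_sub_C_mul_X hunit.unit_spec]
    simp

/-- Witt formula: `1 - n q = ∏_{k=1}^∞ (1 - q^k)^(ℓ_n(k))` in `ℤ⟦q⟧` (q-adically). -/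
theorem witt_formula (n : ℕ) (hn : 1 ≤ n) :
    HasProdExpansion (1 - C (n : ℤ) * X) (fun k => necklace n k) :=
  witt_formula_general n
end
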